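/- arXiv:2201.04765 — 2 statements merged into one kernel-verified Lean document; each statement's English description precedes it below -/
import Mathlib

section
/- The polygon group G_{p,q} = ⟨a_0,…,a_{p-1} | a_i^q = 1, a_i a_{i+1} = a_{i+1} a_i (indices mod p)⟩ is a subgroup of index p in the group H_{p,q} = ⟨a, r | a^q = r^p = 1, [a, r a r^{-1}] = 1⟩, under the embedding sending a_i to r^i a r^{-i}. -/
open FreeGroup

/-- Relations of the polygon group `G_{p,q}` on generators indexed by `ZMod p`. -/
def polygonRels (p q : ℕ) : Set (FreeGroup (ZMod p)) :=
  (Set.range fun i : ZMod p => (of i) ^ q) ∪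
    (Set.range fun i : ZMod p => of i * of (i + 1) * (of i)⁻¹ * (of (i + 1))⁻¹)

/-- The polygon group `G_{p,q}`. -/
def PolygonGroup (p q : ℕ) := PresentedGroup (polygonRels p q)

/-- Generators of `H_{p,q}`: `true ↦ a`, `false ↦ r`. -/
def HRels (p q : ℕ) : Set (FreeGroup Bool) :=
  { (of true) ^ q, (of false) ^ p,
    of true * (of false * of true * (of false)⁻¹) * (of true)⁻¹ *
      (of false * of true * (of false)⁻¹)⁻¹ }

/-- The group `H_{p,q}`. -/
def HGroup (p q : ℕ) := PresentedGroup (HRels p q)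

instance (p q : ℕ) : Group (PolygonGroup p q) := by unfold PolygonGroup; infer_instance
instance (p q : ℕ) : Group (HGroup p q) := by unfold HGroup; infer_instance

/-!
`H_{p,q}` is the semidirect product `G_{p,q} ⋊ ℤ/p`, where the generator `t` of `ℤ/p` rotates
the generators of `G_{p,q}`, `a_i ↦ a_{i+1}`: the map `a ↦ a_0`, `r ↦ t` and the map
`a_i ↦ r^i a r^{-i}`, `t ↦ r` respect the relations and are mutually inverse. Under this
isomorphism `a_i ↦ r^i a r^{-i}` becomes the inclusion of the normal factor, which is injective
and has index `|ℤ/p| = p`.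
-/

namespace PresentedGroup

variable {α M : Type*} [Group M] [MulAction M α] {rels : Set (FreeGroup α)}

theorem lift_of_comp_eq_mk_map (f : α → α) (w : FreeGroup α) :
    FreeGroup.lift (fun x => (of (f x) : PresentedGroup rels)) w = mk rels (FreeGroup.map f w) :=
  DFunLike.congr_fun
    (FreeGroup.ext_hom (f := FreeGroup.lift _) (g := (mk rels).comp (FreeGroup.map f))
      fun x => by simp [of]) w

variable (h : ∀ m : M, ∀ r ∈ rels, FreeGroup.map (m • ·) r ∈ rels)

def smulHom (m : M) : PresentedGroup rels →* PresentedGroup rels :=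
  toGroup (f := fun x => of (m • x)) fun r hr => by
    rw [lift_of_comp_eq_mk_map]
    exact one_of_mem (h m r hr)

theorem smulHom_of (m : M) (x : α) : smulHom h m (of x) = of (m • x) := toGroup.of _

theorem smulHom_one : smulHom h (1 : M) = MonoidHom.id _ :=
  ext fun x => by simp [smulHom_of]

theorem smulHom_mul (m n : M) : smulHom h (m * n) = (smulHom h m).comp (smulHom h n) :=
  ext fun x => by simp [smulHom_of, mul_smul]

def toMulAut : M →* MulAut (PresentedGroup rels) where
  toFun m := (smulHom h m).toMulEquiv (smulHom h m⁻¹)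
    (by rw [← smulHom_mul, inv_mul_cancel, smulHom_one])
    (by rw [← smulHom_mul, mul_inv_cancel, smulHom_one])
  map_one' := MulEquiv.ext fun g => DFunLike.congr_fun (smulHom_one h) g
  map_mul' m n := MulEquiv.ext fun g => DFunLike.congr_fun (smulHom_mul h m n) g

theorem toMulAut_of (m : M) (x : α) : toMulAut h m (of x) = of (m • x) := smulHom_of h m x

end PresentedGroup

section PowZMod

variable {G : Type*} [Group G] {n : ℕ} [NeZero n] (x : G) (hx : x ^ n = 1)

def powZModHom : Multiplicative (ZMod n) →* G where
  toFun i := x ^ i.toAdd.val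
  map_one' := by simp
  map_mul' i j := by
    rw [← pow_add, toAdd_mul, ZMod.val_add, ← pow_eq_pow_mod _ hx]

theorem powZModHom_ofAdd (i : ZMod n) : powZModHom x hx (.ofAdd i) = x ^ i.val := rfl

theorem powZModHom_ofAdd_natCast (k : ℕ) : powZModHom x hx (.ofAdd k) = x ^ k := by
  rw [powZModHom_ofAdd, ZMod.val_natCast, ← pow_eq_pow_mod _ hx]

end PowZMod

namespace PolygonGroup

variable {p q : ℕ} {K : Type*} [Group K]

def gen (i : ZMod p) : PolygonGroup p q := PresentedGroup.of i

theorem gen_pow (i : ZMod p) : (gen i : PolygonGroup p q) ^ q = 1 := by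
  have h := PresentedGroup.one_of_mem (rels := polygonRels p q) (Or.inl ⟨i, rfl⟩)
  rwa [map_pow] at h

theorem commute_gen_gen_add_one (i : ZMod p) :
    Commute (gen i : PolygonGroup p q) (gen (i + 1)) := by
  have h := PresentedGroup.one_of_mem (rels := polygonRels p q) (Or.inr ⟨i, rfl⟩)
  simp only [_root_.map_mul, _root_.map_inv] at h
  exact commutatorElement_eq_one_iff_commute.mp h

def lift (f : ZMod p → K) (hpow : ∀ i, f i ^ q = 1) (hcomm : ∀ i, Commute (f i) (f (i + 1))) :
    PolygonGroup p q →* K :=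
  PresentedGroup.toGroup (f := f) <| by
    rintro r (⟨i, rfl⟩ | ⟨i, rfl⟩)
    · simpa using hpow i
    · simpa [← commutatorElement_def] using commutatorElement_eq_one_iff_commute.mpr (hcomm i)

theorem lift_gen (f : ZMod p → K) (hpow : ∀ i, f i ^ q = 1)
    (hcomm : ∀ i, Commute (f i) (f (i + 1))) (i : ZMod p) : lift f hpow hcomm (gen i) = f i :=
  PresentedGroup.toGroup.of _

theorem hom_ext {φ ψ : PolygonGroup p q →* K} (h : ∀ i, φ (gen i) = ψ (gen i)) : φ = ψ :=
  PresentedGroup.ext h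

def rotate : Multiplicative (ZMod p) →* MulAut (PolygonGroup p q) :=
  PresentedGroup.toMulAut (rels := polygonRels p q) <| by
    rintro m r (⟨i, rfl⟩ | ⟨i, rfl⟩)
    · exact Or.inl ⟨m • i, by simp⟩
    · have hm : m • (i + 1) = m • i + 1 := (add_assoc m.toAdd i 1).symm
      exact Or.inr ⟨m • i, by simp [hm]⟩

theorem rotate_gen (m : Multiplicative (ZMod p)) (i : ZMod p) :
    rotate m (gen i : PolygonGroup p q) = gen (m.toAdd + i) :=
  PresentedGroup.toMulAut_of _ m i

end PolygonGroup

namespace HGroup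

variable {p q : ℕ} {K : Type*} [Group K]

def a : HGroup p q := PresentedGroup.of true

def r : HGroup p q := PresentedGroup.of false

theorem a_pow : (a : HGroup p q) ^ q = 1 := by
  have h := PresentedGroup.one_of_mem (rels := HRels p q) (x := of true ^ q) (by simp [HRels])
  rwa [map_pow] at h

theorem r_pow : (r : HGroup p q) ^ p = 1 := by
  have h := PresentedGroup.one_of_mem (rels := HRels p q) (x := of false ^ p) (by simp [HRels])
  rwa [map_pow] at h

theorem commute_a_conj : Commute (a : HGroup p q) (r * a * r⁻¹) := by
  have h := PresentedGroup.one_of_mem (rels := HRels p q)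
    (x := of true * (of false * of true * (of false)⁻¹) * (of true)⁻¹ *
      (of false * of true * (of false)⁻¹)⁻¹) (by simp [HRels])
  simp only [_root_.map_mul, _root_.map_inv] at h
  exact commutatorElement_eq_one_iff_commute.mp h

def lift (x y : K) (hx : x ^ q = 1) (hy : y ^ p = 1) (hxy : Commute x (y * x * y⁻¹)) :
    HGroup p q →* K :=
  PresentedGroup.toGroup (f := fun b : Bool => if b then x else y) <| by
    rintro w (rfl | rfl | rfl)
    · simpa using hx
    · simpa using hy
    · simpa [commutatorElement_def] using commutatorElement_eq_one_iff_commute.mpr hxy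

variable (x y : K) (hx : x ^ q = 1) (hy : y ^ p = 1) (hxy : Commute x (y * x * y⁻¹))

theorem lift_a : lift x y hx hy hxy a = x := PresentedGroup.toGroup.of _

theorem lift_r : lift x y hx hy hxy r = y := PresentedGroup.toGroup.of _

theorem hom_ext {φ ψ : HGroup p q →* K} (ha : φ a = ψ a) (hr : φ r = ψ r) : φ = ψ :=
  PresentedGroup.ext fun | true => ha | false => hr

end HGroup

namespace HGroup

open PolygonGroup (gen rotate)

variable {p q : ℕ}

def toSemidirectProduct : HGroup p q →* PolygonGroup p q ⋊[rotate] Multiplicative (ZMod p) :=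
  lift (.inl (gen 0)) (.inr (.ofAdd 1))
    (by rw [← _root_.map_pow, PolygonGroup.gen_pow, _root_.map_one])
    (by rw [← _root_.map_pow, ← ofAdd_nsmul, nsmul_one, ZMod.natCast_self, ofAdd_zero,
      _root_.map_one])
    (by
      rw [← _root_.map_inv, ← SemidirectProduct.inl_aut, PolygonGroup.rotate_gen, toAdd_ofAdd,
        add_zero]
      simpa using (PolygonGroup.commute_gen_gen_add_one (q := q) (0 : ZMod p)).map
        (SemidirectProduct.inl (φ := rotate)))

theorem toSemidirectProduct_a : toSemidirectProduct (a : HGroup p q) = .inl (gen (0 : ZMod p)) :=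
  lift_a ..

theorem toSemidirectProduct_r : toSemidirectProduct (r : HGroup p q) = .inr (.ofAdd 1) :=
  lift_r ..

variable [NeZero p]

def rPow : Multiplicative (ZMod p) →* HGroup p q := powZModHom r r_pow

theorem rPow_ofAdd (i : ZMod p) : (rPow (.ofAdd i) : HGroup p q) = r ^ i.val := rfl

theorem rPow_ofAdd_one : (rPow (.ofAdd 1) : HGroup p q) = r := by
  have h := powZModHom_ofAdd_natCast (r : HGroup p q) r_pow 1
  rwa [Nat.cast_one, pow_one] at h

def polygonHom : PolygonGroup p q →* HGroup p q :=
  PolygonGroup.lift (fun i => rPow (.ofAdd i) * a * (rPow (.ofAdd i))⁻¹)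
    (fun i => by rw [conj_pow, a_pow, mul_one, mul_inv_cancel])
    (fun i => by
      have hsucc : rPow (.ofAdd (i + 1)) * a * (rPow (.ofAdd (i + 1)))⁻¹ =
          rPow (.ofAdd i) * (r * a * r⁻¹) * (rPow (.ofAdd i) : HGroup p q)⁻¹ := by
        rw [ofAdd_add, _root_.map_mul, rPow_ofAdd_one]
        group
      rw [hsucc]
      simpa only [MulAut.conj_apply] using commute_a_conj.map (MulAut.conj (rPow (.ofAdd i))))

theorem polygonHom_gen (i : ZMod p) :
    polygonHom (gen i : PolygonGroup p q) = rPow (.ofAdd i) * a * (rPow (.ofAdd i))⁻¹ :=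
  PolygonGroup.lift_gen _ _ _ i

theorem toSemidirectProduct_rPow (t : Multiplicative (ZMod p)) :
    toSemidirectProduct (rPow t : HGroup p q) = .inr t := by
  rw [← ofAdd_toAdd t, rPow_ofAdd, _root_.map_pow, toSemidirectProduct_r, ← _root_.map_pow,
    ← ofAdd_nsmul, nsmul_one, ZMod.natCast_zmod_val]

theorem toSemidirectProduct_comp_polygonHom :
    toSemidirectProduct.comp polygonHom =
      (SemidirectProduct.inl :
        PolygonGroup p q →* PolygonGroup p q ⋊[rotate] Multiplicative (ZMod p)) :=
  PolygonGroup.hom_ext fun i => by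
    rw [MonoidHom.comp_apply, polygonHom_gen, _root_.map_mul, _root_.map_mul, _root_.map_inv,
      toSemidirectProduct_rPow, toSemidirectProduct_a, ← _root_.map_inv,
      ← SemidirectProduct.inl_aut, PolygonGroup.rotate_gen, toAdd_ofAdd, add_zero]

theorem polygonHom_comp_rotate (t : Multiplicative (ZMod p)) :
    polygonHom.comp (rotate t).toMonoidHom =
      (MulAut.conj (rPow t)).toMonoidHom.comp (polygonHom : PolygonGroup p q →* HGroup p q) :=
  PolygonGroup.hom_ext fun i => by
    simp only [MonoidHom.comp_apply, MulEquiv.coe_toMonoidHom, MulAut.conj_apply,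
      PolygonGroup.rotate_gen, polygonHom_gen, ofAdd_add, ofAdd_toAdd, _root_.map_mul]
    group

def ofSemidirectProduct : PolygonGroup p q ⋊[rotate] Multiplicative (ZMod p) →* HGroup p q :=
  SemidirectProduct.lift polygonHom rPow polygonHom_comp_rotate

def equivSemidirectProduct : HGroup p q ≃* PolygonGroup p q ⋊[rotate] Multiplicative (ZMod p) :=
  toSemidirectProduct.toMulEquiv ofSemidirectProduct
    (hom_ext (by simp [ofSemidirectProduct, toSemidirectProduct_a, polygonHom_gen])
      (by simp [ofSemidirectProduct, toSemidirectProduct_r, rPow_ofAdd_one]))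
    (SemidirectProduct.hom_ext
      (by rw [MonoidHom.comp_assoc, ofSemidirectProduct, SemidirectProduct.lift_comp_inl,
        toSemidirectProduct_comp_polygonHom, MonoidHom.id_comp])
      (MonoidHom.ext fun t => by simp [ofSemidirectProduct, toSemidirectProduct_rPow]))

theorem polygonHom_eq :
    (polygonHom : PolygonGroup p q →* HGroup p q) =
      (equivSemidirectProduct (p := p) (q := q)).symm.toMonoidHom.comp SemidirectProduct.inl :=
  (SemidirectProduct.lift_comp_inl _ _ polygonHom_comp_rotate).symm

theorem polygonHom_injective :
    Function.Injective (polygonHom : PolygonGroup p q →* HGroup p q) := by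
  rw [polygonHom_eq]
  exact equivSemidirectProduct.symm.injective.comp SemidirectProduct.inl_injective

theorem index_range_polygonHom :
    (polygonHom : PolygonGroup p q →* HGroup p q).range.index = p := by
  rw [polygonHom_eq, ← MonoidHom.map_range, MulEquiv.toMonoidHom_eq_coe,
    Subgroup.index_map_equiv,
    SemidirectProduct.range_inl_eq_ker_rightHom, Subgroup.index_ker,
    MonoidHom.range_eq_top.2 SemidirectProduct.rightHom_surjective, Subgroup.card_top]
  simp

end HGroup

theorem stmt1_general (p q : ℕ) (hp : 5 ≤ p) :
    ∃ φ : PolygonGroup p q →* HGroup p q,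
      Function.Injective φ ∧
      (∀ i : ZMod p,
        φ (PresentedGroup.of i) =
          (PresentedGroup.of false : HGroup p q) ^ (i.val) * PresentedGroup.of true *
            ((PresentedGroup.of false : HGroup p q) ^ (i.val))⁻¹) ∧
      φ.range.index = p := by
  have : NeZero p := ⟨by omega⟩
  exact ⟨HGroup.polygonHom, HGroup.polygonHom_injective, HGroup.polygonHom_gen,
    HGroup.index_range_polygonHom⟩

theorem stmt1 (p q : ℕ) (hp : 5 ≤ p) (hq : 3 ≤ q) :
    ∃ φ : PolygonGroup p q →* HGroup p q,
      Function.Injective φ ∧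
      (∀ i : ZMod p,
        φ (PresentedGroup.of i) =
          (PresentedGroup.of false : HGroup p q) ^ (i.val) * PresentedGroup.of true *
            ((PresentedGroup.of false : HGroup p q) ^ (i.val))⁻¹) ∧
      φ.range.index = p :=
  stmt1_general p q hp
end

section
/- With γ_j = R_6^j γ_0 R_6^{-j} for j ∈ ℤ/6ℤ, the relations γ_j γ_{j+1} = γ_{j+1} γ_j hold for all j ∈ ℤ/6ℤ. -/
open Complex Matrix

noncomputable def γ₀ : Matrix (Fin 3) (Fin 3) ℂ :=
  !![5/2 - I * (Real.sqrt 3)/2, -(3 * Real.sqrt 6)/4 + I * (3 * Real.sqrt 2)/4,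
       -(3 * Real.sqrt 2)/4 + I * (Real.sqrt 6)/4;
     (3 * Real.sqrt 6)/4 - I * (3 * Real.sqrt 2)/4, -5/4 + I * (3 * Real.sqrt 3)/4,
       -(3 * Real.sqrt 3)/4 + 3/4 * I;
     (3 * Real.sqrt 2)/4 - I * (Real.sqrt 6)/4, -(3 * Real.sqrt 3)/4 + 3/4 * I,
       1/4 + I * (Real.sqrt 3)/4]

noncomputable def R₆ : Matrix (Fin 3) (Fin 3) ℂ :=
  !![1, 0, 0; 0, 1/2, -(Real.sqrt 3)/2; 0, (Real.sqrt 3)/2, 1/2]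

/-- `γ j = R₆^j γ₀ R₆^{-j}` for `j ∈ ℤ/6ℤ`. -/
noncomputable def γ (j : ZMod 6) : Matrix (Fin 3) (Fin 3) ℂ :=
  R₆ ^ j.val * γ₀ * (R₆ ^ j.val)⁻¹

noncomputable def R₆inv : Matrix (Fin 3) (Fin 3) ℂ :=
  !![1, 0, 0; 0, 1/2, (Real.sqrt 3)/2; 0, -(Real.sqrt 3)/2, 1/2]

lemma h3 : ((Real.sqrt 3 : ℝ) : ℂ) ^ 2 = 3 := by
  norm_cast; rw [Real.sq_sqrt]; norm_num

lemma h2 : ((Real.sqrt 2 : ℝ) : ℂ) ^ 2 = 2 := by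
  norm_cast; rw [Real.sq_sqrt]; norm_num

lemma h6 : ((Real.sqrt 6 : ℝ) : ℂ) = (Real.sqrt 2 : ℝ) * (Real.sqrt 3 : ℝ) := by
  norm_cast
  rw [show (6:ℝ) = 2*3 by norm_num, Real.sqrt_mul (by norm_num)]

lemma h2' : ((Real.sqrt 2 : ℝ) : ℂ) ^ 3 = 2 * (Real.sqrt 2 : ℝ) := by
  rw [pow_succ, h2]

lemma h3' : ((Real.sqrt 3 : ℝ) : ℂ) ^ 3 = 3 * (Real.sqrt 3 : ℝ) := by
  rw [pow_succ, h3]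

lemma h2'' : ((Real.sqrt 2 : ℝ) : ℂ) ^ 4 = 4 := by
  rw [show (4:ℕ) = 2*2 by norm_num, pow_mul, h2]; norm_num

lemma h3'' : ((Real.sqrt 3 : ℝ) : ℂ) ^ 4 = 9 := by
  rw [show (4:ℕ) = 2*2 by norm_num, pow_mul, h3]; norm_num

lemma hRR : R₆ * R₆inv = 1 := by
  ext i j
  fin_cases i <;> fin_cases j <;>
    simp [R₆, R₆inv, Matrix.mul_apply, Fin.sum_univ_three, Matrix.one_apply,
      Matrix.vecHead, Matrix.vecTail] <;>
    (try ring_nf) <;> (try norm_num [h3])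

lemma hRinvR : R₆inv * R₆ = 1 := by
  ext i j
  fin_cases i <;> fin_cases j <;>
    simp [R₆, R₆inv, Matrix.mul_apply, Fin.sum_univ_three, Matrix.one_apply,
      Matrix.vecHead, Matrix.vecTail] <;>
    (try ring_nf) <;> (try norm_num [h3])

lemma hcancel (n : ℕ) : R₆ ^ n * R₆inv ^ n = 1 := by
  induction n with
  | zero => simp
  | succ k ih =>
      rw [pow_succ, pow_succ']
      calc R₆ ^ k * R₆ * (R₆inv * R₆inv ^ k)
          = R₆ ^ k * (R₆ * R₆inv) * R₆inv ^ k := by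
            rw [Matrix.mul_assoc, Matrix.mul_assoc, Matrix.mul_assoc]
        _ = R₆ ^ k * R₆inv ^ k := by rw [hRR, Matrix.mul_one]
        _ = 1 := ih

lemma hcancel' (n : ℕ) : R₆inv ^ n * R₆ ^ n = 1 := by
  induction n with
  | zero => simp
  | succ k ih =>
      rw [pow_succ, pow_succ']
      calc R₆inv ^ k * R₆inv * (R₆ * R₆ ^ k)
          = R₆inv ^ k * (R₆inv * R₆) * R₆ ^ k := by
            rw [Matrix.mul_assoc, Matrix.mul_assoc, Matrix.mul_assoc]
        _ = R₆inv ^ k * R₆ ^ k := by rw [hRinvR, Matrix.mul_one]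
        _ = 1 := ih

lemma hpowinv (n : ℕ) : (R₆ ^ n)⁻¹ = R₆inv ^ n :=
  Matrix.inv_eq_right_inv (hcancel n)

set_option maxHeartbeats 1000000 in
lemma hR3 : R₆ * R₆ * R₆ = !![1,0,0;0,-1,0;0,0,-1] := by
  ext i j
  fin_cases i <;> fin_cases j <;>
    simp [R₆, Matrix.mul_apply, Fin.sum_univ_three, Matrix.vecHead, Matrix.vecTail] <;>
    (try ring_nf) <;> (try norm_num [h3, h3']) <;> (try ring)

lemma hR6 : R₆ ^ 6 = 1 := by
  have h6' : R₆ ^ 6 = (R₆ * R₆ * R₆) * (R₆ * R₆ * R₆) := by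
    rw [show (6:ℕ) = 3*2 by norm_num, pow_mul, pow_two, pow_succ, pow_two]
  rw [h6', hR3]
  ext i j
  fin_cases i <;> fin_cases j <;>
    simp [Matrix.mul_apply, Fin.sum_univ_three, Matrix.one_apply,
      Matrix.vecHead, Matrix.vecTail]

lemma hRinv6 : R₆inv ^ 6 = 1 := by
  have := hcancel 6
  rwa [hR6, Matrix.one_mul] at this

lemma conj_comm' {N Ninv A B : Matrix (Fin 3) (Fin 3) ℂ} (h : Ninv * N = 1)
    (hAB : A * B = B * A) :
    (N * A * Ninv) * (N * B * Ninv) = (N * B * Ninv) * (N * A * Ninv) := by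
  have h' : ∀ Z : Matrix (Fin 3) (Fin 3) ℂ, Ninv * (N * Z) = Z := fun Z => by
    rw [← Matrix.mul_assoc, h, Matrix.one_mul]
  have key : ∀ X Y : Matrix (Fin 3) (Fin 3) ℂ,
      (N * X * Ninv) * (N * Y * Ninv) = N * (X * Y) * Ninv := fun X Y => by
    simp only [Matrix.mul_assoc, h']
  rw [key, key, hAB]

set_option maxHeartbeats 2000000 in
lemma keyK : γ₀ * (R₆ * γ₀ * R₆inv) = (R₆ * γ₀ * R₆inv) * γ₀ := by
  ext i j
  fin_cases i <;> fin_cases j <;>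
    simp [γ₀, R₆, R₆inv, Matrix.mul_apply, Fin.sum_univ_three, h6] <;>
    ring_nf <;>
    simp [h2, h3, h2', h3', h2'', h3'', Complex.I_sq] <;>
    (try ring_nf)

lemma gcomm (a : ℕ) :
    (R₆^a * γ₀ * R₆inv^a) * (R₆^(a+1) * γ₀ * R₆inv^(a+1)) =
    (R₆^(a+1) * γ₀ * R₆inv^(a+1)) * (R₆^a * γ₀ * R₆inv^a) := by
  have e : R₆^(a+1) * γ₀ * R₆inv^(a+1) = R₆^a * (R₆ * γ₀ * R₆inv) * R₆inv^a := by
    rw [pow_succ, pow_succ']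
    simp only [Matrix.mul_assoc]
  rw [e]
  exact (conj_comm' (hcancel' a) keyK.symm).symm

lemma gcomm5 :
    (R₆^5 * γ₀ * R₆inv^5) * γ₀ = γ₀ * (R₆^5 * γ₀ * R₆inv^5) := by
  have hB : R₆^5 * (R₆ * γ₀ * R₆inv) * R₆inv^5 = γ₀ := by
    have e : R₆^5 * (R₆ * γ₀ * R₆inv) * R₆inv^5 =
        (R₆^5 * R₆) * (γ₀ * (R₆inv * R₆inv^5)) := by
      simp only [Matrix.mul_assoc]
    rw [e, ← pow_succ, ← pow_succ', hR6, hRinv6, Matrix.one_mul, Matrix.mul_one]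
  calc (R₆^5 * γ₀ * R₆inv^5) * γ₀
      = (R₆^5 * γ₀ * R₆inv^5) * (R₆^5 * (R₆ * γ₀ * R₆inv) * R₆inv^5) := by rw [hB]
    _ = (R₆^5 * (R₆ * γ₀ * R₆inv) * R₆inv^5) * (R₆^5 * γ₀ * R₆inv^5) :=
        conj_comm' (hcancel' 5) keyK
    _ = γ₀ * (R₆^5 * γ₀ * R₆inv^5) := by rw [hB]

lemma gcomm' (a : ℕ) :
    (R₆^a * γ₀ * (R₆^a)⁻¹) * (R₆^(a+1) * γ₀ * (R₆^(a+1))⁻¹) =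
    (R₆^(a+1) * γ₀ * (R₆^(a+1))⁻¹) * (R₆^a * γ₀ * (R₆^a)⁻¹) := by
  rw [hpowinv, hpowinv]; exact gcomm a

lemma gcomm5'' :
    (R₆^5 * γ₀ * (R₆^5)⁻¹) * (R₆^0 * γ₀ * (R₆^0)⁻¹) =
    (R₆^0 * γ₀ * (R₆^0)⁻¹) * (R₆^5 * γ₀ * (R₆^5)⁻¹) := by
  rw [hpowinv, hpowinv]
  simpa using gcomm5

theorem stmt5 : ∀ j : ZMod 6, γ j * γ (j + 1) = γ (j + 1) * γ j := by
  intro j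
  fin_cases j
  exacts [gcomm' 0, gcomm' 1, gcomm' 2, gcomm' 3, gcomm' 4, gcomm5'']
end
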